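/- In a cubic graph with the two-stage partition, every vertex u in R is adjacent to exactly one vertex of S, exactly two vertices of B, and this unique S-neighbor lies in P_{2i}, the set of interior vertices of special paths that are not second end points (not adjacent to any endpoint of their path). -/

import Mathlib

namespace CubicBox

/-- `u` and `v` are consecutive elements of the list `l`. -/
def Consec {V : Type*} (l : List V) (u v : V) : Prop :=
  (u, v) ∈ l.zip l.tail ∨ (v, u) ∈ l.zip l.tail

/-- `u` and `v` are cyclically consecutive elements of the list `l`. -/
def CConsec {V : Type*} (l : List V) (u v : V) : Prop :=
  (u, v) ∈ l.zip (l.rotate 1) ∨ (v, u) ∈ l.zip (l.rotate 1)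

/-- The list `l` enumerates (in order) the vertices of an induced path of `G`:
two listed vertices are adjacent iff they are consecutive in the list. -/
def IsInducedPathList {V : Type*} (G : SimpleGraph V) (l : List V) : Prop :=
  l ≠ [] ∧ l.Nodup ∧ ∀ u ∈ l, ∀ v ∈ l, (G.Adj u v ↔ Consec l u v)

/-- The list `l` enumerates (in cyclic order) the vertices of an induced cycle of `G`. -/
def IsInducedCycleList {V : Type*} (G : SimpleGraph V) (l : List V) : Prop :=
  3 ≤ l.length ∧ l.Nodup ∧ ∀ u ∈ l, ∀ v ∈ l, (G.Adj u v ↔ CConsec l u v)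

/-- The vertex set `P` induces a path in `G`. -/
def IsInducedPath {V : Type*} [DecidableEq V] (G : SimpleGraph V) (P : Finset V) : Prop :=
  ∃ l : List V, IsInducedPathList G l ∧ l.toFinset = P

/-- The vertex set `C` induces a cycle in `G`. -/
def IsInducedCycle {V : Type*} [DecidableEq V] (G : SimpleGraph V) (C : Finset V) : Prop :=
  ∃ l : List V, IsInducedCycleList G l ∧ l.toFinset = C

/-- `x` is an endpoint of the induced path on vertex set `P`. -/
def IsEndpoint {V : Type*} [DecidableEq V] (G : SimpleGraph V) (P : Finset V) (x : V) : Prop :=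
  ∃ l : List V, IsInducedPathList G l ∧ l.toFinset = P ∧
    (l.head? = some x ∨ l.getLast? = some x)

/-- A special cycle: an induced cycle `C` such that for every `x ∈ C`, `C \ {x}` is not
contained in an induced cycle or induced path with at least `|C| + 1` vertices. -/
def SpecialCycle {V : Type*} [DecidableEq V] (G : SimpleGraph V) (C : Finset V) : Prop :=
  IsInducedCycle G C ∧
  ∀ x ∈ C, ¬ ∃ D : Finset V, (IsInducedCycle G D ∨ IsInducedPath G D) ∧
    C.card + 1 ≤ D.card ∧ C.erase x ⊆ D

/-- A special path: a maximal induced path `P` (not contained in an induced cycle nor in a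
longer induced path) such that for each endpoint `x`, `P \ {x}` is not contained in an induced
cycle with at least `|P|` vertices nor in an induced path with at least `|P| + 1` vertices. -/
def SpecialPath {V : Type*} [DecidableEq V] (G : SimpleGraph V) (P : Finset V) : Prop :=
  IsInducedPath G P ∧
  (¬ ∃ D : Finset V, (IsInducedCycle G D ∧ P ⊆ D) ∨
      (IsInducedPath G D ∧ P ⊆ D ∧ P.card < D.card)) ∧
  ∀ x, IsEndpoint G P x → ¬ ∃ D : Finset V,
      (IsInducedCycle G D ∧ P.card ≤ D.card ∧ P.erase x ⊆ D) ∨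
      (IsInducedPath G D ∧ P.card + 1 ≤ D.card ∧ P.erase x ⊆ D)

/-- A special cycle of the subgraph of `G` induced on the vertex set `W`. -/
def SpecialCycleIn {V : Type*} [DecidableEq V] (G : SimpleGraph V) (W C : Finset V) : Prop :=
  C ⊆ W ∧ IsInducedCycle G C ∧
  ∀ x ∈ C, ¬ ∃ D : Finset V, D ⊆ W ∧ (IsInducedCycle G D ∨ IsInducedPath G D) ∧
    C.card + 1 ≤ D.card ∧ C.erase x ⊆ D

/-- A special path of the subgraph of `G` induced on the vertex set `W`. -/
def SpecialPathIn {V : Type*} [DecidableEq V] (G : SimpleGraph V) (W P : Finset V) : Prop :=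
  P ⊆ W ∧ IsInducedPath G P ∧
  (¬ ∃ D : Finset V, D ⊆ W ∧ ((IsInducedCycle G D ∧ P ⊆ D) ∨
      (IsInducedPath G D ∧ P ⊆ D ∧ P.card < D.card))) ∧
  ∀ x, IsEndpoint G P x → ¬ ∃ D : Finset V, D ⊆ W ∧
      ((IsInducedCycle G D ∧ P.card ≤ D.card ∧ P.erase x ⊆ D) ∨
       (IsInducedPath G D ∧ P.card + 1 ≤ D.card ∧ P.erase x ⊆ D))

/-- `ProcessFrom G W Ts A₁`: starting from remaining vertex set `W`, the extraction process of
Algorithm 1 extracts, in order, the special cycles/paths listed in `Ts` (removing each together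
with its neighborhood in the current remaining graph), terminating with remaining set `A₁`,
at which point no connected component of the remaining induced subgraph has `≥ 3` vertices. -/
def ProcessFrom {V : Type*} [DecidableEq V] (G : SimpleGraph V) [DecidableRel G.Adj] :
    Finset V → List (Finset V) → Finset V → Prop
  | W, [], A => A = W ∧
      ¬ ∃ x ∈ W, ∃ y ∈ W, ∃ z ∈ W, x ≠ z ∧ G.Adj y x ∧ G.Adj y z
  | W, T :: rest, A =>
      (SpecialCycleIn G W T ∨ SpecialPathIn G W T) ∧
      ProcessFrom G (W \ (T ∪ W.filter (fun w => ∃ t ∈ T, G.Adj w t))) rest A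

/-- The primary partition `V = S ⊎ N₁ ⊎ A₁` obtained by Algorithm 1, with extracted
special cycles/paths listed in `Ts`: `S` is their union, `N₁ = N(S,G)`, and `A₁` is the
final remaining set. -/
def PrimaryPartitionWith {V : Type*} [Fintype V] [DecidableEq V] (G : SimpleGraph V)
    [DecidableRel G.Adj] (Ts : List (Finset V)) (S N₁ A₁ : Finset V) : Prop :=
  ProcessFrom G Finset.univ Ts A₁ ∧
  S = Ts.foldr (· ∪ ·) ∅ ∧
  N₁ = Finset.univ.filter (fun v => v ∉ S ∧ ∃ s ∈ S, G.Adj v s)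

/-- The primary partition `V = S ⊎ N₁ ⊎ A₁` obtained by Algorithm 1. -/
def PrimaryPartition {V : Type*} [Fintype V] [DecidableEq V] (G : SimpleGraph V)
    [DecidableRel G.Adj] (S N₁ A₁ : Finset V) : Prop :=
  ∃ Ts : List (Finset V), PrimaryPartitionWith G Ts S N₁ A₁

/-- One pass of Algorithm 2 (the refinement producing `R` and `B`): starting from the state
`s = (R, B)`, processing the vertices in the given list one at a time (moving `v` to `R`, and
`X1 v` together with `X2 v` to `B`, whenever `v` has two neighbors in `A₁ \ B`) ends
in the state `t`. -/
def RunsTo {V : Type*} [DecidableEq V] (G : SimpleGraph V) [DecidableRel G.Adj]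
    (A₁ : Finset V) (X1 X2 : V → Finset V) :
    Finset V × Finset V → List V → Finset V × Finset V → Prop
  | s, [], t => t = s
  | s, v :: l, t =>
      let X1v := (A₁ \ s.2).filter (fun a => G.Adj v a)
      let X2v := ((A₁ \ s.2).filter (fun a => ∃ x ∈ X1v, G.Adj a x)) \ X1v
      if X1v.card = 2 then
        X1 v = X1v ∧ X2 v = X2v ∧
        RunsTo G A₁ X1 X2 (insert v s.1, s.2 ∪ X1v ∪ X2v) l t
      else
        RunsTo G A₁ X1 X2 s l t

/-- The refinement of Algorithm 2: iterating over the vertices of `N₁` (in some order) yields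
the sets `R` and `B` (with recorded neighborhoods `X1 u`, `X2 u` for `u ∈ R`), and
`N = N₁ \ R`, `A = A₁ \ B`. -/
def Refinement {V : Type*} [DecidableEq V] (G : SimpleGraph V) [DecidableRel G.Adj]
    (N₁ A₁ : Finset V) (X1 X2 : V → Finset V) (R B N A : Finset V) : Prop :=
  ∃ vs : List V, vs.Nodup ∧ vs.toFinset = N₁ ∧
    RunsTo G A₁ X1 X2 (∅, ∅) vs (R, B) ∧ N = N₁ \ R ∧ A = A₁ \ B

/-- The axis-parallel box in `ℝ^k` that is the product of the closed intervals
`[lo i, hi i]`. -/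
def box {k : ℕ} (lo hi : Fin k → ℝ) : Set (Fin k → ℝ) :=
  Set.univ.pi fun i => Set.Icc (lo i) (hi i)

/-- `G` has a `k`-box representation: it is the intersection graph of a family of
(nonempty) axis-parallel boxes in `ℝ^k` indexed by its vertices. -/
def HasBoxRep {W : Type*} (G : SimpleGraph W) (k : ℕ) : Prop :=
  ∃ lo hi : W → Fin k → ℝ, (∀ v i, lo v i ≤ hi v i) ∧
    ∀ u v : W, G.Adj u v ↔ u ≠ v ∧ (box (lo u) (hi u) ∩ box (lo v) (hi v)).Nonempty

/-- `G` is an interval graph: the intersection graph of a family of closed intervals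
on the real line indexed by its vertices. -/
def IsIntervalGraph {W : Type*} (G : SimpleGraph W) : Prop :=
  ∃ lo hi : W → ℝ, (∀ v, lo v ≤ hi v) ∧
    ∀ u v : W, G.Adj u v ↔ u ≠ v ∧
      (Set.Icc (lo u) (hi u) ∩ Set.Icc (lo v) (hi v)).Nonempty

end CubicBox

namespace CubicBox
section Aux
variable {V : Type*}

lemma zipA : ∀ (m : List V) (u : V) (h : m ≠ []),
    (m ++ [u]).zip ((m ++ [u]).tail) = m.zip m.tail ++ [(m.getLast h, u)]
  | [a], u, _ => by simp
  | a :: b :: m, u, _ => by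
    have ih := zipA (b :: m) u (by simp)
    simp only [List.cons_append, List.zip_cons_cons, List.tail_cons] at *
    rw [ih]
    simp [List.getLast]

lemma zipB : ∀ (m : List V) (u : V) (h : m ≠ []),
    m.zip (m.tail ++ [u]) = m.zip m.tail ++ [(m.getLast h, u)]
  | [a], u, _ => by simp
  | a :: b :: m, u, _ => by
    have ih := zipB (b :: m) u (by simp)
    simp only [List.tail_cons] at *
    rw [show (a :: b :: m).zip ((b :: m) ++ [u]) = (a,b) :: (b::m).zip (m ++ [u]) from rfl, ih]
    simp [List.getLast]

lemma consec_append {m : List V} (h : m ≠ []) (u v w : V) :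
    Consec (m ++ [u]) v w ↔ Consec m v w ∨ (v = m.getLast h ∧ w = u) ∨ (w = m.getLast h ∧ v = u) := by
  unfold Consec
  rw [zipA m u h]
  simp only [List.mem_append, List.mem_singleton, Prod.mk.injEq]
  tauto

lemma consec_cons {m : List V} (h : m ≠ []) (a v w : V) :
    Consec (a :: m) v w ↔ Consec m v w ∨ (v = a ∧ w = m.head h) ∨ (w = a ∧ v = m.head h) := by
  obtain ⟨b, m, rfl⟩ := List.exists_cons_of_ne_nil h
  unfold Consec
  simp only [List.zip_cons_cons, List.tail_cons, List.mem_cons, Prod.mk.injEq, List.head_cons]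
  tauto

lemma rotate_one_eq {l : List V} (h : l ≠ []) : l.rotate 1 = l.tail ++ [l.head h] := by
  obtain ⟨a, m, rfl⟩ := List.exists_cons_of_ne_nil h
  rw [List.rotate_cons_succ, List.rotate_zero]; rfl

lemma cconsec_iff {l : List V} (h : l ≠ []) (u v : V) :
    CConsec l u v ↔ Consec l u v ∨ (u = l.getLast h ∧ v = l.head h) ∨ (v = l.getLast h ∧ u = l.head h) := by
  unfold CConsec Consec
  rw [rotate_one_eq h, zipB l (l.head h) h]
  simp only [List.mem_append, List.mem_singleton, Prod.mk.injEq]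
  tauto

lemma consec_mem {m : List V} {v w : V} (h : Consec m v w) : v ∈ m ∧ w ∈ m := by
  rcases h with h | h <;> have := List.of_mem_zip h
  · exact ⟨this.1, List.tail_subset _ this.2⟩
  · exact ⟨List.tail_subset _ this.2, this.1⟩

lemma cconsec_rotate_one (l : List V) (u v : V) :
    CConsec (l.rotate 1) u v ↔ CConsec l u v := by
  match l with
  | [] => rfl
  | [a] => rw [show ([a] : List V).rotate 1 = [a] by simp [List.rotate_cons_succ]]
  | a :: b :: m =>
    have h1 : (a :: b :: m : List V) ≠ [] := by simp
    have h2 : (b :: m : List V) ≠ [] := by simp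
    have hrot : (a :: b :: m).rotate 1 = (b :: m) ++ [a] := by
      rw [List.rotate_cons_succ, List.rotate_zero]
    have h3 : ((b :: m) ++ [a] : List V) ≠ [] := by simp
    rw [hrot, cconsec_iff h3, cconsec_iff h1, consec_append h2,
      consec_cons h2 a u v]
    have e1 : ((b :: m) ++ [a]).getLast h3 = a := by simp
    have e2 : ((b :: m) ++ [a]).head h3 = b := rfl
    have e3 : (a :: b :: m).getLast h1 = (b :: m).getLast h2 := by
      simp [List.getLast]
    have e4 : (b :: m).head h2 = b := rfl
    rw [e1, e2, e3, e4]
    tauto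

lemma cconsec_rotate (l : List V) (n : ℕ) (u v : V) :
    CConsec (l.rotate n) u v ↔ CConsec l u v := by
  induction n with
  | zero => rw [List.rotate_zero]
  | succ n ih =>
    rw [show l.rotate (n+1) = (l.rotate n).rotate 1 by rw [List.rotate_rotate],
      cconsec_rotate_one, ih]

lemma cyclelist_rotate {G : SimpleGraph V} {l : List V} (h : IsInducedCycleList G l) (n : ℕ) :
    IsInducedCycleList G (l.rotate n) := by
  obtain ⟨h1, h2, h3⟩ := h
  refine ⟨by rwa [List.length_rotate], by rwa [List.nodup_rotate], fun u hu v hv => ?_⟩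
  rw [List.mem_rotate] at hu hv
  rw [cconsec_rotate, ← h3 u hu v hv]

lemma exists_rotate_concat {l : List V} {s : V} (hs : s ∈ l) :
    ∃ (k : ℕ) (m : List V), l.rotate k = m ++ [s] := by
  obtain ⟨p, q, rfl⟩ := List.append_of_mem hs
  refine ⟨p.length + 1, q ++ p, ?_⟩
  have h : p ++ s :: q = (p ++ [s]) ++ q := by simp
  rw [h, List.rotate_eq_drop_append_take (by simp)]
  have : p.length + 1 = (p ++ [s]).length := by simp
  rw [this, List.drop_left, List.take_left]
  simp

lemma cycle_cut {G : SimpleGraph V} {l : List V} (h : IsInducedCycleList G l)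
    {x : V} {m : List V} (hl : l = x :: m) :
    IsInducedPathList G m := by
  obtain ⟨h1, h2, h3⟩ := h
  subst hl
  have hm : m ≠ [] := by rintro rfl; simp at h1
  have hx : x ∉ m := by simp at h2; exact h2.1
  refine ⟨hm, (List.nodup_cons.mp h2).2, fun u hu v hv => ?_⟩
  rw [h3 u (by simp [hu]) v (by simp [hv]),
    cconsec_iff (by simp) u v, consec_cons hm x u v]
  have hhead : (x :: m).head (by simp) = x := rfl
  have hlast : (x :: m).getLast (by simp) = m.getLast hm := by simp [List.getLast_cons hm]
  rw [hhead, hlast]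
  constructor
  · rintro (( hc | ⟨rfl, _⟩ | ⟨rfl, _⟩) | ⟨_, rfl⟩ | ⟨_, rfl⟩)
    · exact hc
    all_goals exact absurd (by assumption) hx
  · exact fun hc => Or.inl (Or.inl hc)

lemma path_extend {G : SimpleGraph V} {m : List V} (hp : IsInducedPathList G m)
    {s : V} (hlast : m.getLast hp.1 = s) {u : V} (hu : u ∉ m)
    (hadj : ∀ v ∈ m, (G.Adj u v ↔ v = s)) :
    IsInducedPathList G (m ++ [u]) := by
  have hsm : s ∈ m := hlast ▸ List.getLast_mem hp.1
  obtain ⟨h1, h2, h3⟩ := hp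
  refine ⟨by simp, by simp [List.nodup_append, h2, hu]; rintro a ha rfl; exact hu ha, fun v hv w hw => ?_⟩
  rw [consec_append h1 u v w, hlast]
  simp only [List.mem_append, List.mem_singleton] at hv hw
  rcases hv with hv | rfl <;> rcases hw with hw | rfl
  · rw [h3 v hv w hw]
    constructor
    · exact fun hc => Or.inl hc
    · rintro (hc | ⟨_, rfl⟩ | ⟨_, rfl⟩)
      · exact hc
      all_goals exact absurd (by assumption) hu
  · rw [G.adj_comm, hadj v hv]
    constructor
    · rintro rfl; tauto
    · rintro (hc | ⟨rfl, _⟩ | ⟨h', rfl⟩)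
      · exact absurd (consec_mem hc).2 hu
      · rfl
      · exact absurd hv hu
  · rw [hadj w hw]
    constructor
    · rintro rfl; tauto
    · rintro (hc | ⟨h', rfl⟩ | ⟨rfl, _⟩)
      · exact absurd (consec_mem hc).1 hu
      · exact absurd hw hu
      · rfl
  · simp only [SimpleGraph.irrefl, false_iff]
    rintro (hc | ⟨h', _⟩ | ⟨h', _⟩)
    · exact absurd (consec_mem hc).1 hu
    all_goals exact hu (h' ▸ hsm)

lemma consec_reverse : ∀ (l : List V) (u v : V), Consec l.reverse u v ↔ Consec l u v
  | [], u, v => Iff.rfl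
  | [a], u, v => Iff.rfl
  | a :: b :: m, u, v => by
    have ih := consec_reverse (b :: m) u v
    have h2 : (b :: m : List V) ≠ [] := by simp
    have h2r : (b :: m : List V).reverse ≠ [] := by simp
    rw [show (a :: b :: m : List V).reverse = (b :: m).reverse ++ [a] by simp,
      consec_append h2r a u v, consec_cons h2 a u v, ih]
    have e1 : (b :: m : List V).reverse.getLast h2r = b := by
      rw [List.getLast_reverse]; rfl
    have e2 : (b :: m : List V).head h2 = b := rfl
    rw [e1, e2]
    tauto

lemma pathlist_reverse {G : SimpleGraph V} {l : List V} (h : IsInducedPathList G l) :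
    IsInducedPathList G l.reverse := by
  obtain ⟨h1, h2, h3⟩ := h
  refine ⟨by simpa, by simpa, fun u hu v hv => ?_⟩
  rw [List.mem_reverse] at hu hv
  rw [consec_reverse, ← h3 u hu v hv]

lemma path_dropLast {G : SimpleGraph V} {l : List V} (hp : IsInducedPathList G l)
    (hne : l.dropLast ≠ []) : IsInducedPathList G l.dropLast := by
  obtain ⟨h1, h2, h3⟩ := hp
  have hsplit : l.dropLast ++ [l.getLast h1] = l := List.dropLast_append_getLast h1
  have hlnotin : l.getLast h1 ∉ l.dropLast := by
    have := hsplit ▸ h2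
    rw [List.nodup_append] at this
    intro hc; exact this.2.2 _ hc _ (by simp) rfl
  refine ⟨hne, (List.Sublist.nodup (List.dropLast_sublist l) h2), fun u hu v hv => ?_⟩
  have hu' : u ∈ l := List.dropLast_subset l hu
  have hv' : v ∈ l := List.dropLast_subset l hv
  have key : Consec l u v ↔ Consec l.dropLast u v ∨
      (u = l.dropLast.getLast hne ∧ v = l.getLast h1) ∨
      (v = l.dropLast.getLast hne ∧ u = l.getLast h1) := by
    conv_lhs => rw [← hsplit]
    exact consec_append hne (l.getLast h1) u v
  rw [h3 u hu' v hv', key]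
  constructor
  · rintro (hc | ⟨_, rfl⟩ | ⟨_, rfl⟩)
    · exact hc
    · exact absurd hv hlnotin
    · exact absurd hu hlnotin
  · exact fun hc => Or.inl hc

lemma endpoint_exists_last {G : SimpleGraph V} [DecidableEq V] {P : Finset V} {s : V}
    (h : IsEndpoint G P s) :
    ∃ l : List V, IsInducedPathList G l ∧ l.toFinset = P ∧ l.getLast? = some s := by
  obtain ⟨l, hl, hlP, hh | hh⟩ := h
  · exact ⟨l.reverse, pathlist_reverse hl, by simpa using hlP, by rw [List.getLast?_reverse, hh]⟩
  · exact ⟨l, hl, hlP, hh⟩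

end Aux

section Proc
variable {V : Type*} [DecidableEq V] {G : SimpleGraph V} [DecidableRel G.Adj]

lemma mem_fold_union {Ts : List (Finset V)} {x : V} :
    x ∈ Ts.foldr (· ∪ ·) ∅ ↔ ∃ T ∈ Ts, x ∈ T := by
  induction Ts with
  | nil => simp
  | cons T rest ih => simp [ih]

lemma pf_A_subset : ∀ {W : Finset V} {Ts : List (Finset V)} {A : Finset V},
    ProcessFrom G W Ts A → A ⊆ W := by
  intro W Ts
  induction Ts generalizing W with
  | nil => intro A h; rw [h.1]
  | cons T rest ih =>
    intro A h
    exact (ih h.2).trans (Finset.sdiff_subset)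

lemma pf_T_subset : ∀ {W : Finset V} {Ts : List (Finset V)} {A : Finset V},
    ProcessFrom G W Ts A → ∀ T ∈ Ts, T ⊆ W := by
  intro W Ts
  induction Ts generalizing W with
  | nil => intro A h T hT; simp at hT
  | cons T' rest ih =>
    intro A h T hT
    rcases List.mem_cons.mp hT with rfl | hT
    · exact h.1.elim (·.1) (·.1)
    · exact ((ih h.2 T hT).trans Finset.sdiff_subset)

lemma pf_A_props : ∀ {W : Finset V} {Ts : List (Finset V)} {A : Finset V},
    ProcessFrom G W Ts A → ∀ v ∈ A, ∀ T ∈ Ts, v ∉ T ∧ ∀ t ∈ T, ¬ G.Adj v t := by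
  intro W Ts
  induction Ts generalizing W with
  | nil => intro A h v hv T hT; simp at hT
  | cons T' rest ih =>
    intro A h v hv T hT
    have hsub := pf_A_subset h.2
    rcases List.mem_cons.mp hT with rfl | hT
    · constructor
      · intro hc
        have := hsub hv
        rw [Finset.mem_sdiff, Finset.mem_union] at this
        exact this.2 (Or.inl hc)
      · intro t ht hadj
        have hvW : v ∈ W := Finset.sdiff_subset (hsub hv)
        have := hsub hv
        rw [Finset.mem_sdiff, Finset.mem_union] at this
        exact this.2 (Or.inr (Finset.mem_filter.mpr ⟨hvW, t, ht, hadj⟩))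
    · exact ih h.2 v hv T hT

lemma pf_locate : ∀ {W : Finset V} {Ts : List (Finset V)} {A : Finset V},
    ProcessFrom G W Ts A → ∀ {u : V}, u ∈ W → ∀ {s : V} {T₀ : Finset V},
    T₀ ∈ Ts → s ∈ T₀ → G.Adj u s → (∀ T ∈ Ts, u ∉ T) →
    (∀ x, G.Adj u x → x ∈ A ∨ x = s) →
    ∃ W', u ∈ W' ∧ A ⊆ W' ∧ (SpecialCycleIn G W' T₀ ∨ SpecialPathIn G W' T₀) := by
  intro W Ts
  induction Ts generalizing W with
  | nil => intro A h u hu s T₀ hT₀ _ _ _ _; simp at hT₀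
  | cons T rest ih =>
    intro A h u hu s T₀ hT₀ hsT₀ hadj hnotin hnbrs
    rcases List.mem_cons.mp hT₀ with rfl | hT₀
    · exact ⟨W, hu, pf_A_subset h, h.1⟩
    · have hAsub := pf_A_subset h.2
      have hT₀sub : T₀ ⊆ W \ (T ∪ W.filter (fun w => ∃ t ∈ T, G.Adj w t)) :=
        pf_T_subset h.2 T₀ hT₀
      have huW' : u ∈ W \ (T ∪ W.filter (fun w => ∃ t ∈ T, G.Adj w t)) := by
        rw [Finset.mem_sdiff, Finset.mem_union]
        refine ⟨hu, fun hc => ?_⟩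
        rcases hc with hc | hc
        · exact hnotin T (by simp) hc
        · obtain ⟨_, t, ht, hadjt⟩ := Finset.mem_filter.mp hc
          rcases hnbrs t hadjt with htA | rfl
          · have := hAsub htA
            rw [Finset.mem_sdiff, Finset.mem_union] at this
            exact this.2 (Or.inl ht)
          · have := hT₀sub hsT₀
            rw [Finset.mem_sdiff, Finset.mem_union] at this
            exact this.2 (Or.inl ht)
      exact ih h.2 huW' hT₀ hsT₀ hadj (fun T' hT' => hnotin T' (by simp [hT'])) hnbrs

lemma runsTo_props {A₁ : Finset V} {X1 X2 : V → Finset V} :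
    ∀ {vs : List V} {s t : Finset V × Finset V},
    RunsTo G A₁ X1 X2 s vs t →
    s.1 ⊆ t.1 ∧ s.2 ⊆ t.2 ∧ t.2 ⊆ s.2 ∪ A₁ ∧ t.1 ⊆ s.1 ∪ vs.toFinset ∧
    ∀ u ∈ t.1, u ∈ s.1 ∨
      ((X1 u).card = 2 ∧ X1 u ⊆ A₁ ∧ (∀ a ∈ X1 u, G.Adj u a) ∧ X1 u ⊆ t.2) := by
  intro vs
  induction vs with
  | nil =>
    intro s t h
    rw [show t = s from h]
    exact ⟨le_refl _, le_refl _, Finset.subset_union_left, by simp, fun u hu => Or.inl hu⟩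
  | cons v l ih =>
    intro s t h
    simp only [RunsTo] at h
    split at h
    case isTrue hcard =>
      obtain ⟨hX1, hX2, hrec⟩ := h
      obtain ⟨i1, i2, i3, i4, i5⟩ := ih hrec
      simp only at i1 i2 i3 i4 i5
      have hX1A : (A₁ \ s.2).filter (fun a => G.Adj v a) ⊆ A₁ :=
        (Finset.filter_subset _ _).trans Finset.sdiff_subset
      have hX2A : ((A₁ \ s.2).filter (fun a => ∃ x ∈ (A₁ \ s.2).filter (fun a => G.Adj v a),
          G.Adj a x)) \ ((A₁ \ s.2).filter (fun a => G.Adj v a)) ⊆ A₁ :=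
        Finset.sdiff_subset.trans ((Finset.filter_subset _ _).trans Finset.sdiff_subset)
      refine ⟨?_, ?_, ?_, ?_, ?_⟩
      · exact (Finset.subset_insert v s.1).trans i1
      · exact Finset.subset_union_left.trans (Finset.subset_union_left.trans i2)
      · refine i3.trans ?_
        intro x hx
        rcases Finset.mem_union.mp hx with hx | hx
        · rcases Finset.mem_union.mp hx with hx | hx
          · rcases Finset.mem_union.mp hx with hx | hx
            · exact Finset.mem_union_left _ hx
            · exact Finset.mem_union_right _ (hX1A hx)
          · exact Finset.mem_union_right _ (hX2A hx)
        · exact Finset.mem_union_right _ hx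
      · refine i4.trans ?_
        intro x hx
        rcases Finset.mem_union.mp hx with hx | hx
        · rcases Finset.mem_insert.mp hx with rfl | hx
          · exact Finset.mem_union_right _ (by simp)
          · exact Finset.mem_union_left _ hx
        · exact Finset.mem_union_right _ (by simp [List.mem_toFinset.mp hx])
      · intro x hx
        rcases i5 x hx with hx' | hprop
        · rcases Finset.mem_insert.mp hx' with rfl | hx'
          · refine Or.inr ⟨hX1 ▸ hcard, hX1 ▸ hX1A, ?_, ?_⟩
            · intro a ha
              rw [hX1] at ha
              exact (Finset.mem_filter.mp ha).2
            · rw [hX1]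
              exact (Finset.subset_union_right.trans Finset.subset_union_left).trans i2
          · exact Or.inl hx'
        · exact Or.inr hprop
    case isFalse =>
      obtain ⟨i1, i2, i3, i4, i5⟩ := ih h
      refine ⟨i1, i2, i3, i4.trans ?_, i5⟩
      intro x hx
      rcases Finset.mem_union.mp hx with hx | hx
      · exact Finset.mem_union_left _ hx
      · exact Finset.mem_union_right _ (by simp [List.mem_toFinset.mp hx])

end Proc
end CubicBox



open CubicBox in
/-- every `u ∈ R` is adjacent to exactly one vertex of `S` and exactly two
vertices of `B`, and its unique `S`-neighbor lies in `P₂ᵢ` (the interior vertices of special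
paths not adjacent to any endpoint of their path). -/
theorem stmt_17 {V : Type} [Fintype V] [DecidableEq V] (G : SimpleGraph V)
    [DecidableRel G.Adj] (hcubic : ∀ v, G.degree v = 3)
    (Ts : List (Finset V)) (S N₁ A₁ R B N A : Finset V) (X1 X2 : V → Finset V)
    (hprim : PrimaryPartitionWith G Ts S N₁ A₁)
    (href : Refinement G N₁ A₁ X1 X2 R B N A)
    (P2i : Finset V)
    (hP2i : ∀ x, x ∈ P2i ↔ ∃ T ∈ Ts, IsInducedPath G T ∧ x ∈ T ∧
        ¬ IsEndpoint G T x ∧ ¬ ∃ e, IsEndpoint G T e ∧ G.Adj x e) :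
    ∀ u ∈ R,
      (S.filter (fun s => G.Adj u s)).card = 1 ∧
      (B.filter (fun b => G.Adj u b)).card = 2 ∧
      ∀ s ∈ S, G.Adj u s → s ∈ P2i := by
  intro u huR
  obtain ⟨hproc, hS, hN₁⟩ := hprim
  obtain ⟨vs, hvsnd, hvsfin, hrun, hN, hA⟩ := href
  obtain ⟨-, -, hBsub, hRsub, hRprop⟩ := runsTo_props hrun
  have hBA : B ⊆ A₁ := by simpa using hBsub
  have huN₁ : u ∈ N₁ := by
    have := hRsub huR
    simp only [Finset.empty_union] at this
    rwa [hvsfin] at this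
  rcases hRprop u huR with h | ⟨hX1card, hX1A, hX1adj, hX1B⟩
  · simp at h
  have hmemS : ∀ x : V, x ∈ S ↔ ∃ T ∈ Ts, x ∈ T := fun x => by rw [hS]; exact mem_fold_union
  have hAS : ∀ v ∈ A₁, v ∉ S ∧ ∀ s ∈ S, ¬ G.Adj v s := by
    intro v hv
    have hp := pf_A_props hproc v hv
    constructor
    · intro hc; obtain ⟨T, hT, hvT⟩ := (hmemS v).mp hc; exact (hp T hT).1 hvT
    · intro s hs hadj; obtain ⟨T, hT, hsT⟩ := (hmemS s).mp hs; exact (hp T hT).2 s hsT hadj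
  rw [hN₁, Finset.mem_filter] at huN₁
  obtain ⟨-, huS, s₀, hs₀S, hadj₀⟩ := huN₁
  have hs₀X1 : s₀ ∉ X1 u := fun hc => (hAS s₀ (hX1A hc)).1 hs₀S
  have hins : insert s₀ (X1 u) ⊆ G.neighborFinset u := by
    intro x hx
    rcases Finset.mem_insert.mp hx with rfl | hx
    · exact (SimpleGraph.mem_neighborFinset _ _ _).mpr hadj₀
    · exact (SimpleGraph.mem_neighborFinset _ _ _).mpr (hX1adj x hx)
  have hcard3 : (insert s₀ (X1 u)).card = 3 := by
    rw [Finset.card_insert_of_notMem hs₀X1, hX1card]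
  have hdeg : (G.neighborFinset u).card = 3 := hcubic u
  have heq : insert s₀ (X1 u) = G.neighborFinset u :=
    Finset.eq_of_subset_of_card_le hins (by rw [hdeg, hcard3])
  have hnbr : ∀ x, G.Adj u x → x = s₀ ∨ x ∈ X1 u := by
    intro x hx
    have : x ∈ insert s₀ (X1 u) := heq ▸ (SimpleGraph.mem_neighborFinset _ _ _).mpr hx
    simpa using this
  have hfS : S.filter (fun s => G.Adj u s) = {s₀} := by
    ext x
    simp only [Finset.mem_filter, Finset.mem_singleton]
    constructor
    · rintro ⟨hxS, hxadj⟩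
      rcases hnbr x hxadj with rfl | hx
      · rfl
      · exact ((hAS x (hX1A hx)).1 hxS).elim
    · rintro rfl; exact ⟨hs₀S, hadj₀⟩
  have hfB : B.filter (fun b => G.Adj u b) = X1 u := by
    ext x
    simp only [Finset.mem_filter]
    constructor
    · rintro ⟨hxB, hxadj⟩
      rcases hnbr x hxadj with rfl | hx
      · exact (((hAS _ (hBA hxB)).1) hs₀S).elim
      · exact hx
    · intro hx; exact ⟨hX1B hx, hX1adj x hx⟩
  refine ⟨by rw [hfS]; rfl, by rw [hfB, hX1card], ?_⟩
  intro s' hs' hadj'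
  have hs'eq : s' = s₀ := by
    rcases hnbr s' hadj' with rfl | hx
    · rfl
    · exact ((hAS s' (hX1A hx)).1 hs').elim
  subst hs'eq
  -- the main combinatorial argument
  obtain ⟨T₀, hT₀Ts, hs₀T₀⟩ := (hmemS s').mp hs'
  obtain ⟨a, haX1⟩ := Finset.card_pos.mp (by rw [hX1card]; norm_num)
  have haA : a ∈ A₁ := hX1A haX1
  have hadja : G.Adj u a := hX1adj a haX1
  have hTsub : ∀ T ∈ Ts, T ⊆ S := fun T hT x hx => (hmemS x).mpr ⟨T, hT, hx⟩
  have hnotin : ∀ T ∈ Ts, u ∉ T := fun T hT hc => huS ((hTsub T hT) hc)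
  have hnbrs' : ∀ x, G.Adj u x → x ∈ A₁ ∨ x = s' := by
    intro x hx
    rcases hnbr x hx with rfl | h
    exacts [Or.inr rfl, Or.inl (hX1A h)]
  obtain ⟨W', huW', hAW', hspec⟩ :=
    pf_locate hproc (Finset.mem_univ u) hT₀Ts hs₀T₀ hadj' hnotin hnbrs'
  have huadjS : ∀ v ∈ S, (G.Adj u v ↔ v = s') := by
    intro v hv
    constructor
    · intro h
      rcases hnbr v h with rfl | h'
      · rfl
      · exact ((hAS v (hX1A h')).1 hv).elim
    · rintro rfl; exact hadj'
  have haS : a ∉ S := (hAS a haA).1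
  have hanadjS : ∀ s ∈ S, ¬ G.Adj a s := (hAS a haA).2
  have hau : a ≠ u := fun h => G.irrefl (h ▸ hadja)
  have hT₀S : T₀ ⊆ S := hTsub T₀ hT₀Ts
  -- double extension helper
  have ext2 : ∀ (m : List V) (hp : IsInducedPathList G m), m.getLast hp.1 = s' →
      (∀ v ∈ m, v ∈ S) → IsInducedPathList G (m ++ [u] ++ [a]) := by
    intro m hp hlast hmS
    have humem : u ∉ m := fun hc => huS (hmS u hc)
    have hp1 : IsInducedPathList G (m ++ [u]) :=
      path_extend hp hlast humem (fun v hv => (huadjS v (hmS v hv)))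
    have hlast1 : (m ++ [u]).getLast hp1.1 = u := by
      simp [List.getLast_append]
    have hamem : a ∉ m ++ [u] := by
      rw [List.mem_append, List.mem_singleton]
      rintro (hc | rfl)
      · exact haS (hmS a hc)
      · exact hau rfl
    refine path_extend hp1 hlast1 hamem ?_
    intro v hv
    rcases List.mem_append.mp hv with hv' | hv'
    · have hvS := hmS v hv'
      have h1 : ¬ G.Adj a v := hanadjS v hvS
      have h2 : v ≠ u := fun h => huS (h ▸ hvS)
      simp [h1, h2]
    · rw [List.mem_singleton] at hv'
      subst hv'
      simp [hadja.symm]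
  rcases hspec with hcyc | hpath
  · exfalso
    obtain ⟨hT₀W, ⟨l, hl, hlT⟩, hforb⟩ := hcyc
    have hs₀l : s' ∈ l := by rw [← List.mem_toFinset, hlT]; exact hs₀T₀
    obtain ⟨k, m₀, hrot⟩ := exists_rotate_concat hs₀l
    have hl' : IsInducedCycleList G (l.rotate k) := cyclelist_rotate hl k
    have hm₀ne : m₀ ≠ [] := by
      intro hc
      subst hc
      have h3 := hl'.1
      rw [hrot] at h3
      simp at h3
    obtain ⟨x, m₁, rfl⟩ := List.exists_cons_of_ne_nil hm₀ne
    have hrot' : l.rotate k = x :: (m₁ ++ [s']) := by simpa using hrot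
    have hpm : IsInducedPathList G (m₁ ++ [s']) := cycle_cut hl' hrot'
    have hm'last : (m₁ ++ [s']).getLast hpm.1 = s' := by
      simp [List.getLast_append]
    have hmemT : ∀ y, y ∈ x :: (m₁ ++ [s']) ↔ y ∈ T₀ := by
      intro y
      rw [← hrot', List.mem_rotate, ← List.mem_toFinset, hlT]
    have hm'T : ∀ v ∈ m₁ ++ [s'], v ∈ T₀ := fun v hv =>
      (hmemT v).mp (List.mem_cons_of_mem _ hv)
    have hm'S : ∀ v ∈ m₁ ++ [s'], v ∈ S := fun v hv => hT₀S (hm'T v hv)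
    have hD := ext2 (m₁ ++ [s']) hpm hm'last hm'S
    have hxT₀ : x ∈ T₀ := (hmemT x).mp List.mem_cons_self
    have hl'nd : (x :: (m₁ ++ [s'])).Nodup := hrot' ▸ hl'.2.1
    have hxm' : x ∉ m₁ ++ [s'] := (List.nodup_cons.mp hl'nd).1
    apply hforb x hxT₀
    refine ⟨((m₁ ++ [s']) ++ [u] ++ [a]).toFinset, ?_, Or.inr ⟨_, hD, rfl⟩, ?_, ?_⟩
    · intro y hy
      rw [List.mem_toFinset] at hy
      rcases List.mem_append.mp hy with hy | hy
      · rcases List.mem_append.mp hy with hy | hy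
        · exact hT₀W (hm'T y hy)
        · rw [List.mem_singleton] at hy; subst hy; exact huW'
      · rw [List.mem_singleton] at hy; subst hy; exact hAW' haA
    · rw [List.toFinset_card_of_nodup hD.2.1]
      have hT₀card : T₀.card = l.length := by
        rw [← hlT, List.toFinset_card_of_nodup hl.2.1]
      have hlen : (l.rotate k).length = l.length := List.length_rotate l k
      rw [hrot'] at hlen
      simp only [List.length_cons, List.length_append, List.length_singleton,
        List.length_nil] at hlen
      simp only [List.length_append, List.length_singleton, List.length_cons,
        List.length_nil]
      omega
    · intro y hy
      rw [Finset.mem_erase] at hy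
      obtain ⟨hyx, hyT⟩ := hy
      have : y ∈ x :: (m₁ ++ [s']) := (hmemT y).mpr hyT
      rw [List.mem_cons] at this
      rcases this with rfl | hmem
      · exact (hyx rfl).elim
      · rw [List.mem_toFinset, List.mem_append]
        exact Or.inl (List.mem_append_left _ hmem)
  · obtain ⟨hT₀W, hTpath, hmax, hendcl⟩ := hpath
    rw [hP2i]
    refine ⟨T₀, hT₀Ts, hTpath, hs₀T₀, ?_, ?_⟩
    · -- s' is not an endpoint
      intro hend
      obtain ⟨l₂, hl₂, hl₂T, hl₂last⟩ := endpoint_exists_last hend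
      have hl₂ne : l₂ ≠ [] := hl₂.1
      have hlast : l₂.getLast hl₂.1 = s' := by
        rw [List.getLast?_eq_getLast hl₂ne] at hl₂last
        exact Option.some_injective _ hl₂last
      have hl₂T' : ∀ v ∈ l₂, v ∈ T₀ := fun v hv => by
        rw [← hl₂T]; exact List.mem_toFinset.mpr hv
      have hl₂S : ∀ v ∈ l₂, v ∈ S := fun v hv => hT₀S (by
        rw [← hl₂T]; exact List.mem_toFinset.mpr hv)
      have humem : u ∉ l₂ := fun hc => huS (hl₂S u hc)
      have hD : IsInducedPathList G (l₂ ++ [u]) :=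
        path_extend hl₂ hlast humem (fun v hv => huadjS v (hl₂S v hv))
      apply hmax
      refine ⟨(l₂ ++ [u]).toFinset, ?_, Or.inr ⟨⟨_, hD, rfl⟩, ?_, ?_⟩⟩
      · intro y hy
        simp only [List.mem_toFinset, List.mem_append, List.mem_singleton] at hy
        rcases hy with hy | rfl
        · exact hT₀W (by rw [← hl₂T]; exact List.mem_toFinset.mpr hy)
        · exact huW'
      · intro y hy
        rw [← hl₂T, List.mem_toFinset] at hy
        rw [List.mem_toFinset, List.mem_append]
        exact Or.inl hy
      · rw [List.toFinset_card_of_nodup hD.2.1, ← hl₂T,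
          List.toFinset_card_of_nodup hl₂.2.1]
        simp
    · -- s' is not adjacent to an endpoint
      rintro ⟨e, hendE, hadjse⟩
      obtain ⟨l₂, hl₂, hl₂T, hl₂last⟩ := endpoint_exists_last hendE
      have hl₂ne : l₂ ≠ [] := hl₂.1
      have hlaste : l₂.getLast hl₂ne = e := by
        rw [List.getLast?_eq_getLast hl₂ne] at hl₂last
        exact Option.some_injective _ hl₂last
      have hse : s' ≠ e := hadjse.ne
      have hs₀l₂ : s' ∈ l₂ := by rw [← List.mem_toFinset, hl₂T]; exact hs₀T₀
      have hel₂ : e ∈ l₂ := hlaste ▸ List.getLast_mem hl₂ne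
      have hsplit : l₂.dropLast ++ [e] = l₂ := by
        rw [← hlaste]; exact List.dropLast_append_getLast hl₂ne
      have hmeml₂ : ∀ y, y ∈ l₂ ↔ y ∈ l₂.dropLast ∨ y = e := by
        intro y
        conv_lhs => rw [← hsplit]
        rw [List.mem_append, List.mem_singleton]
      have hs₀dl : s' ∈ l₂.dropLast := by
        rcases (hmeml₂ s').mp hs₀l₂ with h | h
        · exact h
        · exact (hse h).elim
      have hdlne : l₂.dropLast ≠ [] := List.ne_nil_of_mem hs₀dl
      have hpd := path_dropLast hl₂ hdlne
      have henotin : e ∉ l₂.dropLast := by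
        have hnd := hsplit ▸ hl₂.2.1
        rw [List.nodup_append] at hnd
        intro hc
        exact hnd.2.2 _ hc _ (List.mem_singleton_self e) rfl
      have hc' : Consec (l₂.dropLast ++ [e]) s' e := by
        rw [hsplit]
        exact (hl₂.2.2 s' hs₀l₂ e hel₂).mp hadjse
      rw [consec_append hdlne e s' e] at hc'
      have hdlast : l₂.dropLast.getLast hdlne = s' := by
        rcases hc' with h | ⟨h1, _⟩ | ⟨_, h2⟩
        · exact ((henotin (consec_mem h).2)).elim
        · exact h1.symm
        · exact (hse h2).elim
      have hdlast' : l₂.dropLast.getLast hpd.1 = s' := hdlast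
      have hdlT : ∀ v ∈ l₂.dropLast, v ∈ T₀ := fun v hv => by
        rw [← hl₂T, List.mem_toFinset]
        exact List.dropLast_subset l₂ hv
      have hdlS : ∀ v ∈ l₂.dropLast, v ∈ S := fun v hv => hT₀S (hdlT v hv)
      have hD := ext2 l₂.dropLast hpd hdlast' hdlS
      apply hendcl e hendE
      refine ⟨(l₂.dropLast ++ [u] ++ [a]).toFinset, ?_, Or.inr ⟨⟨_, hD, rfl⟩, ?_, ?_⟩⟩
      · intro y hy
        rw [List.mem_toFinset] at hy
        rcases List.mem_append.mp hy with hy | hy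
        · rcases List.mem_append.mp hy with hy | hy
          · exact hT₀W (hdlT y hy)
          · rw [List.mem_singleton] at hy; subst hy; exact huW'
        · rw [List.mem_singleton] at hy; subst hy; exact hAW' haA
      · rw [List.toFinset_card_of_nodup hD.2.1, ← hl₂T,
          List.toFinset_card_of_nodup hl₂.2.1]
        have : l₂.dropLast.length + 1 = l₂.length := by
          conv_rhs => rw [← hsplit]
          simp
        simp only [List.length_append, List.length_singleton]
        omega
      · intro y hy
        rw [Finset.mem_erase] at hy
        obtain ⟨hye, hyT⟩ := hy
        have : y ∈ l₂ := by rw [← List.mem_toFinset, hl₂T]; exact hyT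
        rcases (hmeml₂ y).mp this with h | h
        · rw [List.mem_toFinset, List.mem_append]
          exact Or.inl (List.mem_append_left _ h)
        · exact (hye h).elim
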